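/- Assume p·q = 0 and q ≠ 0. Then the absolute BRST cohomology of Ab(p,q) at ghost number one is one-dimensional, spanned by the class of q·A_0 = q₀A_0^0 + q₁A_0^1, and at ghost number two it is one-dimensional, spanned by the class of c₀(q·A_0) + 4B_0 (in particular this state is Q-closed because Q(c₀ q·A_0) = −4 q·A_1 = −4 Q B_0, and it is not Q-exact). -/

import Mathlib

/-!
Massless relative BRST complex of the N=2 string in the (−1,0) picture.

Basis: for each N ≥ 0, `A N 0`, `A N 1` in degree 2N+1 and `B N`, `C N` in
degree 2N+2.  Momenta `p q : Fin 2 → ℂ` correspond to (p⁰,p¹) and (q₀,q₁).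
The BRST differential acts by
  Q A_N^0 = 2p⁰ B_N − q₁ C_N,
  Q A_N^1 = 2p¹ B_N + q₀ C_N,
  Q B_N   = q₀ A_{N+1}^0 + q₁ A_{N+1}^1,
  Q C_N   = 2p⁰ A_{N+1}^1 − 2p¹ A_{N+1}^0.
-/

/-- Basis of the relative complex `R(p,q)`. -/
inductive RB where
  | A : ℕ → Fin 2 → RB
  | B : ℕ → RB
  | C : ℕ → RB

/-- The underlying vector space of the complex `R(p,q)`: formal ℂ-linear
combinations of basis vectors. -/
abbrev RSpace : Type := RB →₀ ℂ

/-- The ghost-number degree of a basis vector. -/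
def RB.deg : RB → ℤ
  | .A N _ => 2 * (N : ℤ) + 1
  | .B N => 2 * (N : ℤ) + 2
  | .C N => 2 * (N : ℤ) + 2

/-- The degree-`g` graded piece `R^g` (the span of the basis vectors of
degree `g`); it is `0` for `g ≤ 0`. -/
noncomputable def Rdeg (g : ℤ) : Submodule ℂ RSpace :=
  Finsupp.supported ℂ ℂ {b : RB | RB.deg b = g}

open Finsupp in
/-- The BRST differential `Q` of `R(p,q)`. -/
noncomputable def Qmap (p q : Fin 2 → ℂ) : RSpace →ₗ[ℂ] RSpace :=
  Finsupp.lift RSpace ℂ RB fun b => match b with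
    | .A N μ =>
        (2 * p μ) • single (RB.B N) (1 : ℂ)
          + (if μ = 0 then -(q 1) else q 0) • single (RB.C N) (1 : ℂ)
    | .B N =>
        q 0 • single (RB.A (N + 1) 0) (1 : ℂ)
          + q 1 • single (RB.A (N + 1) 1) (1 : ℂ)
    | .C N =>
        (2 * p 0) • single (RB.A (N + 1) 1) (1 : ℂ)
          - (2 * p 1) • single (RB.A (N + 1) 0) (1 : ℂ)

/-- The state `q·A_N = q₀ A_N^0 + q₁ A_N^1`. -/
noncomputable def qA (q : Fin 2 → ℂ) (N : ℕ) : RSpace :=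
  q 0 • Finsupp.single (RB.A N 0) (1 : ℂ) + q 1 • Finsupp.single (RB.A N 1) (1 : ℂ)

/-- Degree-`g` cocycles: `ker Q ∩ R^g`. -/
noncomputable def Zg (p q : Fin 2 → ℂ) (g : ℤ) : Submodule ℂ RSpace :=
  Rdeg g ⊓ LinearMap.ker (Qmap p q)

/-- Degree-`g` coboundaries: `Q(R^{g-1})`. -/
noncomputable def Bg (p q : Fin 2 → ℂ) (g : ℤ) : Submodule ℂ RSpace :=
  (Rdeg (g - 1)).map (Qmap p q)

/-- The relative BRST cohomology `H^g(R(p,q)) = (ker Q ∩ R^g)/Q(R^{g-1})`,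
realised as the image of the cocycles `Z^g` in the quotient of the whole space
by the coboundaries `B^g = Q(R^{g-1})`. -/
noncomputable def Hco (p q : Fin 2 → ℂ) (g : ℤ) :
    Submodule ℂ (RSpace ⧸ Bg p q g) :=
  (Zg p q g).map (Bg p q g).mkQ
/-!
The absolute complex `Ab(p,q) := R ⊕ c₀R`.  An element is a pair `(x, y)`
representing `x + c₀ y` with `x, y ∈ R`.  The degree-`g` part is
`R^g ⊕ c₀ R^{g-1}`.  The shift operator `S` has degree `+2` and sends each
basis vector at level `N` to the corresponding one at level `N+1`, and the
differential is extended by `Q(c₀ y) = −4 S y − c₀ (Q y)`.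
-/

/-- The level shift `N ↦ N + 1` on basis vectors. -/
def RB.shift : RB → RB
  | .A N μ => .A (N + 1) μ
  | .B N => .B (N + 1)
  | .C N => .C (N + 1)

/-- The degree `+2` map `S` with `S A_N^μ = A_{N+1}^μ`, `S B_N = B_{N+1}`,
`S C_N = C_{N+1}`. -/
noncomputable def Smap : RSpace →ₗ[ℂ] RSpace :=
  Finsupp.lmapDomain ℂ ℂ RB.shift

/-- The underlying space of the absolute complex `Ab(p,q) = R ⊕ c₀R`:
the pair `(x, y)` represents `x + c₀ y`. -/
abbrev AbSpace : Type := RSpace × RSpace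

/-- The degree-`g` graded piece `Ab^g = R^g ⊕ c₀ R^{g-1}`. -/
noncomputable def AbDeg (g : ℤ) : Submodule ℂ AbSpace :=
  (Rdeg g).prod (Rdeg (g - 1))

/-- The BRST differential on the absolute complex:
`Q (x + c₀ y) = (Q x − 4 S y) − c₀ (Q y)`. -/
noncomputable def QAb (p q : Fin 2 → ℂ) : AbSpace →ₗ[ℂ] AbSpace :=
  LinearMap.prod
    ((Qmap p q) ∘ₗ (LinearMap.fst ℂ RSpace RSpace)
      - (4 : ℂ) • (Smap ∘ₗ (LinearMap.snd ℂ RSpace RSpace)))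
    (- ((Qmap p q) ∘ₗ (LinearMap.snd ℂ RSpace RSpace)))

/-- Degree-`g` cocycles of the absolute complex. -/
noncomputable def AbZ (p q : Fin 2 → ℂ) (g : ℤ) : Submodule ℂ AbSpace :=
  AbDeg g ⊓ LinearMap.ker (QAb p q)

/-- Degree-`g` coboundaries of the absolute complex: `Q(Ab^{g-1})`. -/
noncomputable def AbB (p q : Fin 2 → ℂ) (g : ℤ) : Submodule ℂ AbSpace :=
  (AbDeg (g - 1)).map (QAb p q)

/-- The absolute BRST cohomology
`H^g(Ab(p,q)) = (ker Q ∩ Ab^g)/Q(Ab^{g-1})`, realised as the image of the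
cocycles in the quotient by the coboundaries. -/
noncomputable def HAb (p q : Fin 2 → ℂ) (g : ℤ) :
    Submodule ℂ (AbSpace ⧸ AbB p q g) :=
  (AbZ p q g).map (AbB p q g).mkQ

/-!
Since `R^g = 0` for `g ≤ 0`, coboundaries of `Ab` in degrees one and two have no `c₀`-part.
So `H^1(Ab) = H^1(R)`, and subtracting a multiple of `c₀(q·A_0) + 4B_0` from a cocycle of degree
two kills its `c₀`-part (a relative cocycle of degree one), leaving a relative cocycle of degree
two. A direct computation with the `2 × 2` matrices of `Q` on `R^1 = ⟨A_0^0, A_0^1⟩` and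
`R^2 = ⟨B_0, C_0⟩` shows that, for `q ≠ 0`, the relative cocycles of degree one are the multiples
of `q·A_0` and every relative cocycle of degree two is exact.
-/

open Finsupp Submodule

lemma smul_single_add_smul_single_eq_zero {α R : Type*} [Semiring R] {a₁ a₂ : α}
    (ha : a₁ ≠ a₂) {c₁ c₂ : R} (h : c₁ • single a₁ (1 : R) + c₂ • single a₂ 1 = 0) :
    c₁ = 0 ∧ c₂ = 0 := by
  constructor
  · simpa [single_eq_of_ne ha, single_eq_of_ne ha.symm] using DFunLike.congr_fun h a₁
  · simpa [single_eq_of_ne ha, single_eq_of_ne ha.symm] using DFunLike.congr_fun h a₂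

section Quotient

variable {R M : Type*} [Ring R] [AddCommGroup M] [Module R M] {Z B : Submodule R M} {z : M}

lemma span_mkQ_eq_top (hz : B.mkQ z ∈ Z.map B.mkQ) (h : ∀ w ∈ Z, ∃ t : R, w - t • z ∈ B) :
    span R {(⟨B.mkQ z, hz⟩ : Z.map B.mkQ)} = ⊤ := by
  rw [eq_top_iff']
  rintro ⟨_, w, hw, rfl⟩
  obtain ⟨t, ht⟩ := h w hw
  refine mem_span_singleton.mpr ⟨t, Subtype.ext ?_⟩
  simpa [← Quotient.mk_smul, Submodule.Quotient.eq] using neg_mem ht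

lemma mkQ_ne_zero (hz : B.mkQ z ∈ Z.map B.mkQ) (h : z ∉ B) :
    (⟨B.mkQ z, hz⟩ : Z.map B.mkQ) ≠ 0 :=
  fun h0 => h ((Quotient.mk_eq_zero B).mp (congrArg Subtype.val h0))

end Quotient

section Relative

variable (p q : Fin 2 → ℂ)

lemma Qmap_single_A_zero (N : ℕ) :
    Qmap p q (single (RB.A N 0) 1) =
      (2 * p 0) • single (RB.B N) 1 + (-q 1) • single (RB.C N) 1 := by
  simp [Qmap]

lemma Qmap_single_A_one (N : ℕ) :
    Qmap p q (single (RB.A N 1) 1) =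
      (2 * p 1) • single (RB.B N) 1 + q 0 • single (RB.C N) 1 := by
  simp [Qmap]

lemma Qmap_single_B (N : ℕ) : Qmap p q (single (RB.B N) 1) = qA q (N + 1) := by
  simp [Qmap, qA]

lemma Qmap_single_C (N : ℕ) :
    Qmap p q (single (RB.C N) 1) =
      (2 * p 0) • single (RB.A (N + 1) 1) 1 - (2 * p 1) • single (RB.A (N + 1) 0) 1 := by
  simp [Qmap]

lemma Qmap_smul_A_add_smul_A (N : ℕ) (a b : ℂ) :
    Qmap p q (a • single (RB.A N 0) 1 + b • single (RB.A N 1) 1) =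
      (2 * (a * p 0 + b * p 1)) • single (RB.B N) 1 + (b * q 0 - a * q 1) • single (RB.C N) 1 := by
  rw [map_add, map_smul, map_smul, Qmap_single_A_zero, Qmap_single_A_one]
  match_scalars <;> ring

lemma Qmap_smul_B_add_smul_C (N : ℕ) (β γ : ℂ) :
    Qmap p q (β • single (RB.B N) 1 + γ • single (RB.C N) 1) =
      (β * q 0 - 2 * γ * p 1) • single (RB.A (N + 1) 0) 1
        + (β * q 1 + 2 * γ * p 0) • single (RB.A (N + 1) 1) 1 := by
  rw [map_add, map_smul, map_smul, Qmap_single_B, Qmap_single_C, qA]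
  match_scalars <;> ring

variable {p q}

lemma Qmap_qA (h : p 0 * q 0 + p 1 * q 1 = 0) (N : ℕ) : Qmap p q (qA q N) = 0 := by
  rw [qA, Qmap_smul_A_add_smul_A, show q 0 * p 0 + q 1 * p 1 = 0 by linear_combination h,
    show q 1 * q 0 - q 0 * q 1 = 0 by ring]
  simp

lemma Smap_qA (q : Fin 2 → ℂ) (N : ℕ) : Smap (qA q N) = qA q (N + 1) := by
  simp [Smap, qA, mapDomain_add, mapDomain_single, RB.shift]

lemma apply_zero_ne_zero_or_apply_one_ne_zero {M : Type*} [Zero M] {v : Fin 2 → M}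
    (hv : v ≠ 0) : v 0 ≠ 0 ∨ v 1 ≠ 0 := by
  simpa [Fin.exists_fin_two] using Function.ne_iff.mp hv

lemma qA_ne_zero (hq : q ≠ 0) (N : ℕ) : qA q N ≠ 0 := by
  intro h0
  obtain ⟨h₀, h₁⟩ := smul_single_add_smul_single_eq_zero (by simp) h0
  rcases apply_zero_ne_zero_or_apply_one_ne_zero hq with hq₀ | hq₁ <;> contradiction

lemma one_le_deg (b : RB) : 1 ≤ b.deg := by
  cases b <;> simp only [RB.deg] <;> omega

lemma Rdeg_eq_bot {g : ℤ} (hg : g ≤ 0) : Rdeg g = ⊥ := by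
  rw [Rdeg, ← supported_empty]
  congr
  exact Set.eq_empty_of_forall_notMem fun b (hb : b.deg = g) => by
    have := one_le_deg b
    omega

lemma mem_Rdeg_one {x : RSpace} :
    x ∈ Rdeg 1 ↔ ∃ a b : ℂ, a • single (RB.A 0 0) 1 + b • single (RB.A 0 1) 1 = x := by
  have hdeg : {b : RB | b.deg = 1} = {RB.A 0 0, RB.A 0 1} := by
    ext b
    cases b with
    | A N μ => fin_cases μ <;> simp [RB.deg]
    | _ N => simp [RB.deg]; omega
  rw [Rdeg, supported_eq_span_single, hdeg, Set.image_pair, mem_span_pair]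

lemma mem_Rdeg_two {x : RSpace} :
    x ∈ Rdeg 2 ↔ ∃ β γ : ℂ, β • single (RB.B 0) 1 + γ • single (RB.C 0) 1 = x := by
  have hdeg : {b : RB | b.deg = 2} = {RB.B 0, RB.C 0} := by
    ext b
    cases b with
    | A N μ => simp [RB.deg]; omega
    | _ N => simp [RB.deg]
  rw [Rdeg, supported_eq_span_single, hdeg, Set.image_pair, mem_span_pair]

lemma qA_mem_Rdeg_one (q : Fin 2 → ℂ) : qA q 0 ∈ Rdeg 1 :=
  mem_Rdeg_one.mpr ⟨_, _, rfl⟩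

lemma Zg_one_le_span (hq : q ≠ 0) : Zg p q 1 ≤ span ℂ {qA q 0} := by
  rintro _ ⟨hx, hQ⟩
  obtain ⟨a, b, rfl⟩ := mem_Rdeg_one.mp hx
  rw [SetLike.mem_coe, LinearMap.mem_ker, Qmap_smul_A_add_smul_A] at hQ
  obtain ⟨-, hab⟩ := smul_single_add_smul_single_eq_zero (by simp) hQ
  rw [mem_span_singleton, qA]
  rcases apply_zero_ne_zero_or_apply_one_ne_zero hq with hq₀ | hq₁
  · refine ⟨a / q 0, ?_⟩
    match_scalars <;> field_simp
    linear_combination -hab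
  · refine ⟨b / q 1, ?_⟩
    match_scalars <;> field_simp
    linear_combination hab

lemma Zg_two_le_Bg (hq : q ≠ 0) : Zg p q 2 ≤ Bg p q 2 := by
  rintro _ ⟨hx, hQ⟩
  obtain ⟨β, γ, rfl⟩ := mem_Rdeg_two.mp hx
  rw [SetLike.mem_coe, LinearMap.mem_ker, Qmap_smul_B_add_smul_C] at hQ
  obtain ⟨h₀, h₁⟩ := smul_single_add_smul_single_eq_zero (by simp) hQ
  rcases apply_zero_ne_zero_or_apply_one_ne_zero hq with hq₀ | hq₁
  · refine ⟨(0 : ℂ) • single (RB.A 0 0) 1 + (γ / q 0) • single (RB.A 0 1) 1,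
      mem_Rdeg_one.mpr ⟨_, _, rfl⟩, ?_⟩
    rw [Qmap_smul_A_add_smul_A]
    match_scalars <;> field_simp
    · linear_combination -h₀
    · ring
  · refine ⟨(-γ / q 1) • single (RB.A 0 0) 1 + (0 : ℂ) • single (RB.A 0 1) 1,
      mem_Rdeg_one.mpr ⟨_, _, rfl⟩, ?_⟩
    rw [Qmap_smul_A_add_smul_A]
    match_scalars <;> field_simp
    · linear_combination -h₁
    · ring

end Relative

section Absolute

lemma QAb_mk (p q : Fin 2 → ℂ) (x y : RSpace) :
    QAb p q (x, y) = (Qmap p q x - (4 : ℂ) • Smap y, -Qmap p q y) := rfl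

variable {p q : Fin 2 → ℂ} {g : ℤ}

lemma mk_mem_AbZ_iff {x y : RSpace} :
    (x, y) ∈ AbZ p q g ↔
      x ∈ Rdeg g ∧ y ∈ Rdeg (g - 1) ∧ Qmap p q x = (4 : ℂ) • Smap y ∧ Qmap p q y = 0 := by
  simp [AbZ, AbDeg, QAb_mk, sub_eq_zero, and_assoc]

lemma mk_zero_mem_AbZ_iff {x : RSpace} : (x, 0) ∈ AbZ p q g ↔ x ∈ Zg p q g := by
  simp [mk_mem_AbZ_iff, Zg]

lemma snd_mem_Zg_of_mem_AbZ {z : AbSpace} (hz : z ∈ AbZ p q g) : z.2 ∈ Zg p q (g - 1) := by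
  obtain ⟨-, hy, -, hQy⟩ := mk_mem_AbZ_iff.mp hz
  exact ⟨hy, hQy⟩

lemma AbB_eq_prod_bot (hg : g ≤ 2) : AbB p q g = (Bg p q g).prod ⊥ := by
  have hbot : Rdeg (g - 1 - 1) = ⊥ := Rdeg_eq_bot (by omega)
  ext ⟨x, y⟩
  simp only [AbB, AbDeg, hbot, Bg, mem_map, mem_prod, mem_bot, Prod.exists, QAb_mk, Prod.mk.injEq]
  constructor
  · rintro ⟨x', y', ⟨hx', rfl⟩, rfl, rfl⟩
    simpa using ⟨x', hx', rfl⟩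
  · rintro ⟨⟨x', hx', rfl⟩, rfl⟩
    exact ⟨x', 0, ⟨hx', rfl⟩, by simp, by simp⟩

lemma exists_sub_smul_mem_AbB_one (hq : q ≠ 0) {w : AbSpace} (hw : w ∈ AbZ p q 1) :
    ∃ t : ℂ, w - t • ((qA q 0, 0) : AbSpace) ∈ AbB p q 1 := by
  obtain ⟨x, y⟩ := w
  obtain rfl : y = 0 := by
    have hy := (mk_mem_AbZ_iff.mp hw).2.1
    rwa [sub_self, Rdeg_eq_bot le_rfl, mem_bot] at hy
  obtain ⟨t, rfl⟩ := mem_span_singleton.mp (Zg_one_le_span hq (mk_zero_mem_AbZ_iff.mp hw))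
  exact ⟨t, by simp⟩

lemma exists_sub_smul_mem_AbB_two (hq : q ≠ 0) {v w : AbSpace} (hv : v ∈ AbZ p q 2)
    (hv₂ : v.2 = qA q 0) (hw : w ∈ AbZ p q 2) : ∃ t : ℂ, w - t • v ∈ AbB p q 2 := by
  obtain ⟨t, ht⟩ := mem_span_singleton.mp (Zg_one_le_span hq (snd_mem_Zg_of_mem_AbZ hw))
  have hdiff : ((w - t • v).1, 0) ∈ AbZ p q 2 := by
    have hsnd : (w - t • v).2 = 0 := by simp [hv₂, ht]
    rw [← hsnd, Prod.mk.eta]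
    exact sub_mem hw (smul_mem _ t hv)
  refine ⟨t, (AbB_eq_prod_bot le_rfl).ge ⟨Zg_two_le_Bg hq (mk_zero_mem_AbZ_iff.mp hdiff), ?_⟩⟩
  simp [hv₂, ht]

end Absolute

/-- Assume `p·q = 0` and `q ≠ 0`.  Then the absolute BRST
cohomology of `Ab(p,q)` at ghost number one is one-dimensional, spanned by the
class of `q·A_0 = q₀ A_0^0 + q₁ A_0^1`, and at ghost number two it is
one-dimensional, spanned by the class of `c₀(q·A_0) + 4 B_0` (in particular
this state is `Q`-closed because `Q(c₀ q·A_0) = −4 q·A_1 = −4 Q B_0` — the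
first two conjuncts below — and it is not `Q`-exact). -/
theorem absolute_cohomology_ghost_one_two (p q : Fin 2 → ℂ)
    (h : p 0 * q 0 + p 1 * q 1 = 0) (hq : q ≠ 0)
    (hm1 : (AbB p q 1).mkQ ((qA q 0, 0) : AbSpace) ∈ HAb p q 1)
    (hm2 : (AbB p q 2).mkQ
        (((4 : ℂ) • Finsupp.single (RB.B 0) (1 : ℂ), qA q 0) : AbSpace)
      ∈ HAb p q 2) :
    (QAb p q ((0, qA q 0) : AbSpace) = (((-4 : ℂ) • qA q 1, 0) : AbSpace))
    ∧ (Qmap p q (Finsupp.single (RB.B 0) (1 : ℂ)) = qA q 1)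
    ∧ (((qA q 0, 0) : AbSpace) ∈ AbZ p q 1)
    ∧ ((((4 : ℂ) • Finsupp.single (RB.B 0) (1 : ℂ), qA q 0) : AbSpace)
        ∈ AbZ p q 2)
    ∧ (Submodule.span ℂ
        {(⟨(AbB p q 1).mkQ ((qA q 0, 0) : AbSpace), hm1⟩ : ↥(HAb p q 1))} = ⊤
      ∧ (⟨(AbB p q 1).mkQ ((qA q 0, 0) : AbSpace), hm1⟩ : ↥(HAb p q 1)) ≠ 0)
    ∧ (Submodule.span ℂ
        {(⟨(AbB p q 2).mkQ
            (((4 : ℂ) • Finsupp.single (RB.B 0) (1 : ℂ), qA q 0) : AbSpace),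
          hm2⟩ : ↥(HAb p q 2))} = ⊤
      ∧ (⟨(AbB p q 2).mkQ
            (((4 : ℂ) • Finsupp.single (RB.B 0) (1 : ℂ), qA q 0) : AbSpace),
          hm2⟩ : ↥(HAb p q 2)) ≠ 0) := by
  have hQqA : Qmap p q (qA q 0) = 0 := Qmap_qA h 0
  have hZ1 : ((qA q 0, 0) : AbSpace) ∈ AbZ p q 1 :=
    mk_zero_mem_AbZ_iff.mpr ⟨qA_mem_Rdeg_one q, hQqA⟩
  have hZ2 : (((4 : ℂ) • single (RB.B 0) 1, qA q 0) : AbSpace) ∈ AbZ p q 2 :=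
    mk_mem_AbZ_iff.mpr ⟨smul_mem _ _ (mem_Rdeg_two.mpr ⟨1, 0, by simp⟩), qA_mem_Rdeg_one q,
      by rw [map_smul, Qmap_single_B, Smap_qA], hQqA⟩
  refine ⟨by simp [QAb_mk, hQqA, Smap_qA], Qmap_single_B p q 0, hZ1, hZ2,
    ⟨span_mkQ_eq_top hm1 fun w hw => exists_sub_smul_mem_AbB_one hq hw, mkQ_ne_zero hm1 ?_⟩,
    ⟨span_mkQ_eq_top hm2 fun w hw => exists_sub_smul_mem_AbB_two hq hZ2 rfl hw,
      mkQ_ne_zero hm2 ?_⟩⟩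
  all_goals rw [AbB_eq_prod_bot (by norm_num)]; simp [Bg, Rdeg_eq_bot, qA_ne_zero hq]
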